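/- arXiv:cs/0408003 — 7 statements merged into one kernel-verified Lean document; each statement's English description precedes it below -/
import Mathlib

section
/- Let n ≥ 1 and let P_n be the metric space on points {1,…,n} with d(i,j) = |i−j|. Let T be an ultrametric space and f : T → P_n a map satisfying d_T(u,v) ≥ |f(u) − f(v)| for all u,v ∈ T (a non-contractive multi-embedding). Then for every choice of points u'_1,…,u'_n ∈ T with f(u'_i) = i for each i, the length Σ_{i=1}^{n−1} d_T(u'_i, u'_{i+1}) is at least (n/2)·log₂ n. -/
/-! In an ultrametric space the endpoints of a path are no farther apart than its longest
step. Along the lifted path `u'_a, …, u'_b` non-contractivity gives `d(u'_a, u'_b) ≥ b - a`,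
so some step `u'_k u'_{k+1}` has length at least `b - a`. Removing that step splits the path
into two shorter lifted paths, and by induction `g(m) = (m/2)·log₂ m` bounds the length of a
lifted path through `m` points: convexity of `t log t` gives
`g(x + y) ≤ g(x) + g(y) + (x + y)/2`, and `(x + y)/2 ≤ x + y - 1` once `x + y ≥ 2`. -/

def IsUltrametricSpace (X : Type*) [MetricSpace X] : Prop :=
  ∀ x y z : X, dist x z ≤ max (dist x y) (dist y z)

open Finset

theorem IsUltrametricSpace.exists_mem_Ico_dist_le {T : Type*} [MetricSpace T]
    (hT : IsUltrametricSpace T) (v : ℕ → T) {a b : ℕ} (hab : a < b) :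
    ∃ k ∈ Ico a b, dist (v a) (v b) ≤ dist (v k) (v (k + 1)) := by
  induction b, hab using Nat.le_induction with
  | base => exact ⟨a, by simp, le_rfl⟩
  | succ b hab ih =>
    obtain ⟨k, hk, hdist⟩ := ih
    rcases le_max_iff.mp (hT (v a) (v b) (v (b + 1))) with h | h
    · exact ⟨k, by simp only [mem_Ico] at hk ⊢; omega, h.trans hdist⟩
    · exact ⟨b, by simp only [mem_Ico]; omega, h⟩

theorem half_mul_logb_add_le {x y : ℝ} (hx : 0 ≤ x) (hy : 0 ≤ y) :
    (x + y) / 2 * Real.logb 2 (x + y) ≤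
      x / 2 * Real.logb 2 x + y / 2 * Real.logb 2 y + (x + y) / 2 := by
  rcases (add_nonneg hx hy).eq_or_lt with hxy | hxy
  · obtain ⟨rfl, rfl⟩ : x = 0 ∧ y = 0 := ⟨by linarith, by linarith⟩
    simp
  have hconv := Real.convexOn_mul_log.2 (Set.mem_Ici.mpr hx) (Set.mem_Ici.mpr hy)
    (by norm_num : (0 : ℝ) ≤ 1 / 2) (by norm_num : (0 : ℝ) ≤ 1 / 2) (by norm_num)
  simp only [smul_eq_mul] at hconv
  rw [show 1 / 2 * x + 1 / 2 * y = (x + y) / 2 by ring,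
    Real.log_div hxy.ne' two_ne_zero] at hconv
  have key : (x + y) / 2 * Real.log (x + y) ≤
      x / 2 * Real.log x + y / 2 * Real.log y + (x + y) / 2 * Real.log 2 := by
    linarith
  have hlog2 : 0 < Real.log 2 := Real.log_pos one_lt_two
  calc (x + y) / 2 * Real.logb 2 (x + y) = (x + y) / 2 * Real.log (x + y) / Real.log 2 := by
        rw [Real.logb, mul_div_assoc]
    _ ≤ (x / 2 * Real.log x + y / 2 * Real.log y + (x + y) / 2 * Real.log 2) / Real.log 2 := by
        gcongr
    _ = x / 2 * Real.logb 2 x + y / 2 * Real.logb 2 y + (x + y) / 2 := by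
        rw [Real.logb, Real.logb]
        field_simp

theorem IsUltrametricSpace.half_mul_logb_le_sum_dist {T : Type*} [MetricSpace T]
    (hT : IsUltrametricSpace T) (v : ℕ → T) {a b : ℕ}
    (hv : ∀ i j, a ≤ i → i ≤ j → j ≤ b → (j : ℝ) - i ≤ dist (v i) (v j)) (hab : a ≤ b) :
    ((b : ℝ) - a + 1) / 2 * Real.logb 2 ((b : ℝ) - a + 1) ≤
      ∑ i ∈ Ico a b, dist (v i) (v (i + 1)) := by
  induction h : b - a using Nat.strong_induction_on generalizing a b with
  | _ m ih =>
    rcases hab.eq_or_lt with rfl | hlt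
    · simp
    obtain ⟨k, hk, hstep⟩ := hT.exists_mem_Ico_dist_le v hlt
    rw [mem_Ico] at hk
    have hleft := ih (k - a) (by omega) (fun i j hi hij hj => hv i j hi hij (by omega)) hk.1 rfl
    have hright := ih (b - (k + 1)) (by omega) (fun i j hi hij hj => hv i j (by omega) hij hj)
      hk.2 rfl
    rw [Nat.cast_succ, show (b : ℝ) - (k + 1) + 1 = b - k by ring] at hright
    have hsplit : ∑ i ∈ Ico a b, dist (v i) (v (i + 1)) =
        ∑ i ∈ Ico a k, dist (v i) (v (i + 1)) + dist (v k) (v (k + 1)) +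
          ∑ i ∈ Ico (k + 1) b, dist (v i) (v (i + 1)) := by
      rw [← sum_Ico_consecutive _ hk.1 hk.2.le, sum_eq_sum_Ico_succ_bot hk.2]
      ring
    have hlong : ((b : ℝ) - a + 1) / 2 ≤ dist (v k) (v (k + 1)) := by
      have : (a : ℝ) + 1 ≤ b := by exact_mod_cast hlt
      linarith [hv a b le_rfl hab le_rfl]
    have hka : (a : ℝ) ≤ k := by exact_mod_cast hk.1
    have hkb : (k : ℝ) + 1 ≤ b := by exact_mod_cast hk.2
    have hconv := half_mul_logb_add_le (x := (k : ℝ) - a + 1) (y := (b : ℝ) - k)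
      (by linarith) (by linarith)
    rw [hsplit, show (b : ℝ) - a + 1 = ((k : ℝ) - a + 1) + ((b : ℝ) - k) by ring]
    linarith

/-- Proposition 10 (core estimate): if `T` is an ultrametric space and `f : T → {1,…,n}`
is non-contractive for the path metric `d(i,j) = |i - j|`, then every choice of
representatives `u'_1,…,u'_n` with `f(u'_i) = i` traces a path in `T` of length at least
`(n/2)·log₂ n`. -/
theorem path_lift_in_ultrametric_long
    (n : ℕ) (hn : 1 ≤ n) (T : Type*) [MetricSpace T] (hT : IsUltrametricSpace T)
    (f : T → Fin n)
    (hnc : ∀ u v : T, |(((f u : ℕ) : ℝ)) - (((f v : ℕ) : ℝ))| ≤ dist u v)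
    (u' : Fin n → T) (hu' : ∀ i : Fin n, f (u' i) = i) :
    (n : ℝ) / 2 * Real.logb 2 n ≤
      ∑ i : Fin (n - 1),
        dist (u' ⟨(i : ℕ), by omega⟩) (u' ⟨(i : ℕ) + 1, by omega⟩) := by
  set v : ℕ → T := fun i => u' ⟨min i (n - 1), by omega⟩
  have hv_of_lt : ∀ i (hi : i < n), v i = u' ⟨i, hi⟩ := fun i hi =>
    congrArg u' (Fin.ext (by simp only; omega))
  have hv : ∀ i j, 0 ≤ i → i ≤ j → j ≤ n - 1 → (j : ℝ) - i ≤ dist (v i) (v j) := by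
    intro i j _ hij hj
    have h := hnc (v j) (v i)
    rw [hv_of_lt i (by omega), hv_of_lt j (by omega), hu', hu', dist_comm] at h
    rw [hv_of_lt i (by omega), hv_of_lt j (by omega)]
    exact (le_abs_self _).trans h
  have hlen := hT.half_mul_logb_le_sum_dist v hv (Nat.zero_le _)
  have hcount : ((n - 1 : ℕ) : ℝ) - (0 : ℕ) + 1 = n := by
    rw [Nat.cast_sub hn]
    simp
  rw [hcount, ← range_eq_Ico, sum_range] at hlen
  convert hlen using 2 with i
  rw [hv_of_lt, hv_of_lt]
end

section
/- Let n ≥ 2 and let P_n be the metric space on points {1,…,n} with d(i,j) = |i−j|. If T is an ultrametric space and f : T → P_n is a surjective non-contractive multi-embedding with path distortion at most α, then α ≥ (n·log₂ n)/(2(n−1)); in particular α ≥ (1/2)·log₂ n. -/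
/-- The metric space `P_n` on the points `{1,…,n}` (modelled by `Fin n`) with
`d(i,j) = |i - j|`, obtained by inducing the metric of `ℝ` along `i ↦ (i : ℝ)`. -/
noncomputable instance pathMetricFin (n : ℕ) : MetricSpace (Fin n) :=
  MetricSpace.induced (fun i : Fin n => ((i : ℕ) : ℝ))
    (fun i j h => Fin.val_injective (Nat.cast_injective h)) inferInstance

/-- The length of a path (finite sequence of points) in a metric space. -/
noncomputable def pathLength {X : Type*} [MetricSpace X] (p : List X) : ℝ :=
  (List.zipWith dist p p.tail).sum

/-- A non-contractive multi-embedding `f : N → M` has path distortion at most `α`. -/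
def PathDistortionLE {N M : Type*} [MetricSpace N] [MetricSpace M] (f : N → M) (α : ℝ) : Prop :=
  ∀ p : List M, ∃ p' : List N, p'.map f = p ∧ pathLength p' ≤ α * pathLength p

open Real Finset

theorem IsUltrametricDist.exists_dist_le_dist_succ {X : Type*} [PseudoMetricSpace X]
    [IsUltrametricDist X] (u : ℕ → X) {k : ℕ} (hk : 0 < k) :
    ∃ i < k, dist (u 0) (u k) ≤ dist (u i) (u (i + 1)) := by
  induction k, hk using Nat.le_induction with
  | base => exact ⟨0, zero_lt_one, le_rfl⟩
  | succ k _ ih =>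
    obtain ⟨i, hik, hi⟩ := ih
    rcases le_max_iff.mp (dist_triangle_max (u 0) (u k) (u (k + 1))) with h | h
    · exact ⟨i, by omega, h.trans hi⟩
    · exact ⟨k, k.lt_succ_self, h⟩

theorem mul_logb_add_le {p q : ℝ} (hp : 1 ≤ p) (hq : 1 ≤ q) :
    (p + q) / 2 * logb 2 (p + q) ≤ (p + q - 1) + p / 2 * logb 2 p + q / 2 * logb 2 q := by
  have hlog2 : 0 < log 2 := log_pos one_lt_two
  have hconv := convexOn_mul_log.2 (Set.mem_Ici.2 (by linarith : (0 : ℝ) ≤ p))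
    (Set.mem_Ici.2 (by linarith : (0 : ℝ) ≤ q)) (by norm_num : (0 : ℝ) ≤ 1 / 2)
    (by norm_num : (0 : ℝ) ≤ 1 / 2) (by norm_num)
  simp only [smul_eq_mul] at hconv
  rw [show 1 / 2 * p + 1 / 2 * q = (p + q) / 2 by ring,
    log_div (by positivity) two_ne_zero] at hconv
  have key : (p + q) / 2 * log (p + q) ≤ (p + q - 1) * log 2 + p / 2 * log p + q / 2 * log q := by
    nlinarith [mul_nonneg (by linarith : (0 : ℝ) ≤ (p + q) / 2 - 1) hlog2.le]
  simp only [logb]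
  field_simp
  linarith

theorem IsUltrametricDist.mul_logb_le_sum_dist_succ {X : Type*} [PseudoMetricSpace X]
    [IsUltrametricDist X] (k : ℕ) (u : ℕ → X)
    (hu : ∀ i j, i ≤ j → j ≤ k → (j : ℝ) - i ≤ dist (u i) (u j)) :
    ((k : ℝ) + 1) / 2 * logb 2 ((k : ℝ) + 1) ≤ ∑ i ∈ range k, dist (u i) (u (i + 1)) := by
  induction k using Nat.strong_induction_on generalizing u with
  | _ k ih =>
    rcases Nat.eq_zero_or_pos k with rfl | hk
    · simp
    obtain ⟨i, hik, hedge⟩ := exists_dist_le_dist_succ u hk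
    obtain ⟨t, rfl⟩ : ∃ t, k = i + 1 + t := ⟨k - (i + 1), by omega⟩
    have hleft := ih i (by omega) u fun a b hab hb => hu a b hab (by omega)
    have hright := ih t (by omega) (fun j => u (i + 1 + j)) fun a b hab hb => by
      simpa using hu (i + 1 + a) (i + 1 + b) (by omega) (by omega)
    have hlong : ((i + 1 + t : ℕ) : ℝ) ≤ dist (u i) (u (i + 1)) := by
      simpa using (hu 0 _ (Nat.zero_le _) le_rfl).trans hedge
    have hsplit := mul_logb_add_le (p := i + 1) (q := t + 1) (by simp) (by simp)
    simp only [← add_assoc] at hright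
    rw [sum_range_add, sum_range_succ]
    push_cast at hlong ⊢
    rw [show (i : ℝ) + 1 + t + 1 = i + 1 + (t + 1) by ring]
    linarith

theorem pathLength_cons_cons {X : Type*} [MetricSpace X] (x y : X) (p : List X) :
    pathLength (x :: y :: p) = dist x y + pathLength (y :: p) := by
  simp [pathLength]

theorem pathLength_eq_sum_range {X : Type*} [MetricSpace X] (p : List X) (d : X) :
    pathLength p = ∑ i ∈ range (p.length - 1), dist (p.getD i d) (p.getD (i + 1) d) := by
  induction p with
  | nil => simp [pathLength]
  | cons x p ih =>
    cases p with
    | nil => simp [pathLength]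
    | cons y p =>
      rw [pathLength_cons_cons, ih]
      simp only [List.length_cons, Nat.add_sub_cancel, sum_range_succ']
      simp [add_comm (dist x y)]

theorem dist_fin_eq {n : ℕ} (a b : Fin n) : dist a b = |((a : ℕ) : ℝ) - (b : ℕ)| :=
  Real.dist_eq _ _

theorem pathLength_finRange {n : ℕ} (hn : 0 < n) : pathLength (List.finRange n) = n - 1 := by
  rw [pathLength_eq_sum_range _ ⟨0, hn⟩, List.length_finRange]
  rw [sum_congr rfl fun i hi => ?_, sum_const, card_range, nsmul_one, Nat.cast_pred hn]
  rw [mem_range] at hi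
  rw [List.getD_eq_getElem _ _ (by simp; omega), List.getD_eq_getElem _ _ (by simp; omega),
    dist_fin_eq]
  simp

theorem sub_le_dist_getD_of_map_eq_finRange {T : Type*} [PseudoMetricSpace T] {n : ℕ}
    {f : T → Fin n} (hnc : ∀ u v : T, dist (f u) (f v) ≤ dist u v) {p : List T}
    (hp : p.map f = List.finRange n) (d : T) {i j : ℕ} (hij : i ≤ j) (hj : j < n) :
    (j : ℝ) - i ≤ dist (p.getD i d) (p.getD j d) := by
  have hval : ∀ k < n, ((f (p.getD k d) : ℕ) : ℝ) = k := fun k hk => by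
    rw [← List.getD_map p d f, hp, List.getD_eq_getElem _ _ (by simpa using hk)]
    simp
  calc (j : ℝ) - i = dist (f (p.getD i d)) (f (p.getD j d)) := by
        rw [dist_fin_eq, hval i (by omega), hval j hj, abs_sub_comm,
          abs_of_nonneg (by simpa using hij)]
    _ ≤ _ := hnc _ _

theorem path_embedding_ultrametric_lower_bound_general
    (n : ℕ) (hn : 2 ≤ n) (T : Type*) [MetricSpace T] (hT : IsUltrametricSpace T)
    (f : T → Fin n) (α : ℝ)
    (hnc : ∀ u v : T, dist (f u) (f v) ≤ dist u v)
    (hpd : PathDistortionLE f α) :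
    (n : ℝ) * Real.logb 2 n / (2 * ((n : ℝ) - 1)) ≤ α ∧
    (1 / 2 : ℝ) * Real.logb 2 n ≤ α := by
  have : IsUltrametricDist T := ⟨hT⟩
  obtain ⟨p, hp, hlen⟩ := hpd (List.finRange n)
  have hplen : p.length = n := by simpa using congrArg List.length hp
  have d : T := p[0]
  have hlower := IsUltrametricDist.mul_logb_le_sum_dist_succ (n - 1) (p.getD · d)
    fun i j hij hj => sub_le_dist_getD_of_map_eq_finRange hnc hp d hij (by omega)
  rw [← hplen, ← pathLength_eq_sum_range, hplen, Nat.cast_pred (by omega),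
    sub_add_cancel] at hlower
  rw [pathLength_finRange (by omega)] at hlen
  have hmain : (n : ℝ) / 2 * logb 2 n ≤ α * (n - 1) := hlower.trans hlen
  have hn' : (2 : ℝ) ≤ n := by exact_mod_cast hn
  have hlog : 0 ≤ logb 2 n := logb_nonneg one_lt_two (by linarith)
  have hbound : (n : ℝ) * logb 2 n / (2 * ((n : ℝ) - 1)) ≤ α := by
    rw [div_le_iff₀ (by linarith)]
    linarith
  refine ⟨hbound, le_trans ?_ hbound⟩
  rw [le_div_iff₀ (by linarith)]
  nlinarith

/-- Proposition 10: any surjective non-contractive multi-embedding of the simple path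
metric on `n ≥ 2` points into an ultrametric space has path distortion at least
`n·log₂ n / (2(n-1))`, and in particular at least `(1/2)·log₂ n`. -/
theorem path_embedding_ultrametric_lower_bound
    (n : ℕ) (hn : 2 ≤ n) (T : Type*) [MetricSpace T] (hT : IsUltrametricSpace T)
    (f : T → Fin n) (α : ℝ)
    (hsurj : Function.Surjective f)
    (hnc : ∀ u v : T, dist (f u) (f v) ≤ dist u v)
    (hpd : PathDistortionLE f α) :
    (n : ℝ) * Real.logb 2 n / (2 * ((n : ℝ) - 1)) ≤ α ∧
    (1 / 2 : ℝ) * Real.logb 2 n ≤ α :=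
  path_embedding_ultrametric_lower_bound_general n hn T hT f α hnc hpd
end

section
/- Let G be a finite connected simple graph on n vertices with maximum degree at most d (d ≥ 1), whose shortest-path metric dist_G has diameter at most Δ, and let s ≥ 1 be an integer. Then there exist a finite metric space N satisfying the four-point condition with |N| ≤ n·d^s and a surjective non-contractive multi-embedding f : N → (V(G), dist_G) with path distortion at most 2 + Δ/s. -/
/-- A metric space satisfying the four-point condition (a tree metric). -/
def FourPointCond (X : Type*) [MetricSpace X] : Prop :=
  ∀ x y z w : X, dist x y + dist z w ≤ max (dist x z + dist y w) (dist x w + dist y z)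

/-- The length of a path of vertices of a graph `G` with respect to the shortest-path
metric `dist_G`. -/
noncomputable def graphPathLength {V : Type*} (G : SimpleGraph V) (p : List V) : ℝ :=
  (List.zipWith (fun a b => (G.dist a b : ℝ)) p p.tail).sum

/-- A multi-embedding `f : T → V(G)`, non-contractive for `dist_G`, has path distortion
at most `α` with respect to `dist_G`. -/
def GraphPathDistortionLE {T V : Type*} [MetricSpace T] (G : SimpleGraph V)
    (f : T → V) (α : ℝ) : Prop :=
  ∀ p : List V, ∃ p' : List T, p'.map f = p ∧ pathLength p' ≤ α * graphPathLength G p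

/-!
The points of the tree are the walks in `G` with at most `s` vertices, arranged in their prefix
tree: the parent of a walk is the walk without its last vertex, tree edges have length `1`, and the
one-vertex walks hang at distance `(Δ + 1) / 2` below a common root. A walk is sent to its last
vertex. Two walks branch at a common vertex, so their tree distance dominates the graph distance
of their endpoints.

A path `v₀, v₁, …` is lifted greedily. While the current walk has room, it is extended along a
geodesic to the next vertex, at cost exactly the graph distance `g`; otherwise (then
`length + g > s`) it jumps to the one-vertex walk at the next vertex, at cost at most
`length - 1 + Δ + 1`. The potential `(1 + Δ / s) * (length - 1)` pays for the jumps, which gives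
distortion `2 + Δ / s`. For `d ≥ 2` there are at most `n (1 + d + ⋯ + d ^ (s - 1)) ≤ n d ^ s`
walks; for `d = 1` the graph is a vertex or an edge and one-vertex walks at mutual distance `1`
suffice.
-/

namespace List

variable {α : Type*} [DecidableEq α]

def commonPrefixLength : List α → List α → ℕ
  | a :: x, b :: y => if a = b then commonPrefixLength x y + 1 else 0
  | _, _ => 0

@[simp] lemma commonPrefixLength_nil_left (y : List α) : commonPrefixLength [] y = 0 := by
  cases y <;> rfl

@[simp] lemma commonPrefixLength_nil_right (x : List α) : commonPrefixLength x [] = 0 := by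
  cases x <;> rfl

lemma commonPrefixLength_cons_cons (a b : α) (x y : List α) :
    commonPrefixLength (a :: x) (b :: y) = if a = b then commonPrefixLength x y + 1 else 0 :=
  rfl

lemma commonPrefixLength_comm :
    ∀ x y : List α, commonPrefixLength x y = commonPrefixLength y x
  | [], y => by simp
  | _ :: _, [] => by simp
  | a :: x, b :: y => by
    simp only [commonPrefixLength_cons_cons, eq_comm (a := a), commonPrefixLength_comm x y]

@[simp] lemma commonPrefixLength_self : ∀ x : List α, commonPrefixLength x x = x.length
  | [] => rfl
  | a :: x => by simp [commonPrefixLength_cons_cons, commonPrefixLength_self x]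

lemma commonPrefixLength_le_length_left : ∀ x y : List α, commonPrefixLength x y ≤ x.length
  | [], y => by simp
  | _ :: _, [] => by simp
  | a :: x, b :: y => by
    have := commonPrefixLength_le_length_left x y
    rw [commonPrefixLength_cons_cons]
    split <;> simp [this]

lemma commonPrefixLength_le_length_right (x y : List α) : commonPrefixLength x y ≤ y.length :=
  commonPrefixLength_comm x y ▸ commonPrefixLength_le_length_left y x

lemma min_commonPrefixLength_le : ∀ x y z : List α,
    min (commonPrefixLength x y) (commonPrefixLength y z) ≤ commonPrefixLength x z
  | [], _, _ | _ :: _, [], _ | _ :: _, _ :: _, [] => by simp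
  | a :: x, b :: y, c :: z => by
    have := min_commonPrefixLength_le x y z
    simp only [commonPrefixLength_cons_cons]
    split_ifs <;> grind

lemma take_commonPrefixLength :
    ∀ x y : List α, x.take (commonPrefixLength x y) = y.take (commonPrefixLength x y)
  | [], _ | _ :: _, [] => by simp
  | a :: x, b :: y => by
    rw [commonPrefixLength_cons_cons]
    split_ifs with h
    · simp [h, take_commonPrefixLength x y]
    · simp

lemma eq_of_commonPrefixLength_eq_length {x y : List α} (hx : commonPrefixLength x y = x.length)
    (hy : commonPrefixLength x y = y.length) : x = y := by
  calc x = x.take (commonPrefixLength x y) := by rw [hx, take_length]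
    _ = y.take (commonPrefixLength x y) := take_commonPrefixLength x y
    _ = y := by rw [hy, take_length]

lemma commonPrefixLength_append_right :
    ∀ x r : List α, commonPrefixLength x (x ++ r) = x.length
  | [], _ => by simp
  | a :: x, r => by simp [commonPrefixLength_cons_cons, commonPrefixLength_append_right x r]

end List

lemma min_add_le_add_of_min_le {α : Type*} (M : α → α → ℝ) (hsymm : ∀ a b, M a b = M b a)
    (hmin : ∀ a b c, min (M a b) (M b c) ≤ M a c) (x y z w : α) :
    min (M x z + M y w) (M x w + M y z) ≤ M x y + M z w := by
  by_contra! hlt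
  rw [lt_min_iff] at hlt
  have h₁ := hmin x z y
  have h₂ := hmin x w y
  have h₃ := hmin z x w
  have h₄ := hmin z y w
  rw [hsymm z y] at h₁ h₄
  rw [hsymm w y] at h₂
  rw [hsymm z x] at h₃
  rcases min_le_iff.mp h₁ with h₁ | h₁ <;> rcases min_le_iff.mp h₂ with h₂ | h₂ <;>
    rcases min_le_iff.mp h₃ with h₃ | h₃ <;> rcases min_le_iff.mp h₄ with h₄ | h₄ <;>
    linarith

section PrefixTree

open List

variable {α : Type*} [DecidableEq α] (H : ℕ → ℝ)

/-- The path distance in the trie of all lists, a list of length `k` sitting at height `H k`. -/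
noncomputable def prefixTreeDist (x y : List α) : ℝ :=
  H x.length + H y.length - 2 * H (commonPrefixLength x y)

lemma prefixTreeDist_self (x : List α) : prefixTreeDist H x x = 0 := by
  simp only [prefixTreeDist, commonPrefixLength_self]; ring

lemma prefixTreeDist_comm (x y : List α) : prefixTreeDist H x y = prefixTreeDist H y x := by
  simp only [prefixTreeDist, commonPrefixLength_comm x y]; ring

variable {H}

lemma prefixTreeDist_triangle (hH : Monotone H) (x y z : List α) :
    prefixTreeDist H x z ≤ prefixTreeDist H x y + prefixTreeDist H y z := by
  have hxz := hH.map_min.symm.trans_le (hH (min_commonPrefixLength_le x y z))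
  have hxy := hH (commonPrefixLength_le_length_right x y)
  have hyz := hH (commonPrefixLength_le_length_left y z)
  simp only [prefixTreeDist]
  rcases min_cases (H (commonPrefixLength x y)) (H (commonPrefixLength y z)) with
    ⟨h, -⟩ | ⟨h, -⟩ <;> linarith

lemma prefixTreeDist_pos (hH : StrictMono H) {x y : List α} (hxy : x ≠ y) :
    0 < prefixTreeDist H x y := by
  have hx := commonPrefixLength_le_length_left x y
  have hy := commonPrefixLength_le_length_right x y
  have hlt : commonPrefixLength x y < x.length ∨ commonPrefixLength x y < y.length := by
    by_contra! h
    exact hxy (eq_of_commonPrefixLength_eq_length (by omega) (by omega))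
  have hx' := hH.monotone hx
  have hy' := hH.monotone hy
  simp only [prefixTreeDist]
  rcases hlt with h | h <;> linarith [hH h]

noncomputable abbrev prefixTreeMetricSpace (hH : StrictMono H) : MetricSpace (List α) where
  dist := prefixTreeDist H
  dist_self := prefixTreeDist_self H
  dist_comm := prefixTreeDist_comm H
  dist_triangle := prefixTreeDist_triangle hH.monotone
  eq_of_dist_eq_zero {x y} h := by
    by_contra hxy
    exact (prefixTreeDist_pos hH hxy).ne' h

lemma prefixTreeDist_four_point (hH : Monotone H) (x y z w : List α) :
    prefixTreeDist H x y + prefixTreeDist H z w ≤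
      max (prefixTreeDist H x z + prefixTreeDist H y w)
        (prefixTreeDist H x w + prefixTreeDist H y z) := by
  have hmeet := min_add_le_add_of_min_le (fun a b : List α => H (commonPrefixLength a b))
    (fun a b => by rw [commonPrefixLength_comm])
    (fun a b c => hH.map_min.symm.trans_le (hH (min_commonPrefixLength_le a b c))) x y z w
  simp only [prefixTreeDist]
  rcases min_cases (H (commonPrefixLength x z) + H (commonPrefixLength y w))
      (H (commonPrefixLength x w) + H (commonPrefixLength y z)) with ⟨h, -⟩ | ⟨h, -⟩
  · exact le_max_of_le_left (by linarith)
  · exact le_max_of_le_right (by linarith)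

lemma prefixTreeDist_le_add (hH : Monotone H) (hH₀ : 0 ≤ H 0) (x y : List α) :
    prefixTreeDist H x y ≤ H x.length + H y.length := by
  have := hH (Nat.zero_le (commonPrefixLength x y))
  simp only [prefixTreeDist]; linarith

lemma prefixTreeDist_append_right (x r : List α) :
    prefixTreeDist H x (x ++ r) = H (x.length + r.length) - H x.length := by
  simp only [prefixTreeDist, commonPrefixLength_append_right, length_append]; ring

end PrefixTree

section PathDistortion

variable {T V : Type*} [MetricSpace T] {G : SimpleGraph V}

lemma pathLength_cons_cons_s6 (a b : T) (l : List T) :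
    pathLength (a :: b :: l) = dist a b + pathLength (b :: l) := rfl

lemma graphPathLength_cons_cons (a b : V) (l : List V) :
    graphPathLength G (a :: b :: l) = G.dist a b + graphPathLength G (b :: l) := rfl

lemma graphPathLength_nonneg : ∀ p : List V, 0 ≤ graphPathLength G p
  | [] | [_] => le_rfl
  | a :: b :: l => by
    rw [graphPathLength_cons_cons]
    have := graphPathLength_nonneg (b :: l)
    positivity

lemma GraphPathDistortionLE.mono {f : T → V} {α β : ℝ} (h : GraphPathDistortionLE G f α)
    (hαβ : α ≤ β) : GraphPathDistortionLE G f β := fun p =>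
  let ⟨p', hp', hlen⟩ := h p
  ⟨p', hp', hlen.trans (mul_le_mul_of_nonneg_right hαβ (graphPathLength_nonneg p))⟩

lemma graphPathDistortionLE_of_potential {f : T → V} {α : ℝ} (Φ : T → ℝ)
    (hΦ : ∀ w, 0 ≤ Φ w) (hstart : ∀ v, ∃ w, f w = v ∧ Φ w = 0)
    (hstep : ∀ w b, ∃ w', f w' = b ∧ dist w w' + Φ w' ≤ α * G.dist (f w) b + Φ w) :
    GraphPathDistortionLE G f α := by
  have hlift : ∀ (p : List V) (w : T), ∃ q : List T, q.map f = p ∧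
      pathLength (w :: q) ≤ α * graphPathLength G (f w :: p) + Φ w := by
    intro p
    induction p with
    | nil => exact fun w => ⟨[], rfl, by simpa [pathLength, graphPathLength] using hΦ w⟩
    | cons b p ih =>
      intro w
      obtain ⟨w', rfl, hw'⟩ := hstep w b
      obtain ⟨q, rfl, hq⟩ := ih w'
      refine ⟨w' :: q, rfl, ?_⟩
      rw [pathLength_cons_cons_s6, graphPathLength_cons_cons]
      linarith
  rintro (_ | ⟨v, p⟩)
  · exact ⟨[], rfl, by simp [pathLength, graphPathLength]⟩
  · obtain ⟨w, rfl, hw⟩ := hstart v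
    obtain ⟨q, rfl, hq⟩ := hlift p w
    exact ⟨w :: q, rfl, by linarith⟩

end PathDistortion

section WalkLists

open Finset

variable {V : Type*} [Fintype V] [DecidableEq V] (G : SimpleGraph V) [DecidableRel G.Adj]

def walkListsUpTo : ℕ → Finset (List V)
  | 0 => ∅
  | k + 1 => univ.image (fun v => [v]) ∪
      (walkListsUpTo k).biUnion fun l =>
        ({w | ∀ a ∈ l.head?, G.Adj w a} : Finset V).image (· :: l)

lemma mem_walkListsUpTo {k : ℕ} {l : List V} :
    l ∈ walkListsUpTo G k ↔ l ≠ [] ∧ l.IsChain G.Adj ∧ l.length ≤ k := by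
  induction k generalizing l with
  | zero => simp only [walkListsUpTo, notMem_empty, false_iff]; grind
  | succ k ih =>
    simp only [walkListsUpTo, mem_union, mem_image, mem_univ, true_and, mem_biUnion,
      mem_filter, ih]
    constructor
    · rintro (⟨v, rfl⟩ | ⟨l', ⟨hne, hc, hlen⟩, w, hw, rfl⟩)
      · simp
      · exact ⟨by simp, hc.cons hw, by simpa using hlen⟩
    · rintro ⟨hne, hc, hlen⟩
      match l, hc with
      | [v], _ => exact Or.inl ⟨v, rfl⟩
      | w :: a :: l', hc =>
        exact Or.inr ⟨a :: l', ⟨by simp, hc.tail, by simpa using hlen⟩, w,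
          by simpa using hc.rel, rfl⟩

lemma card_walkListsUpTo_succ_le {d : ℕ} (hdeg : ∀ v, G.degree v ≤ d) (k : ℕ) :
    #(walkListsUpTo G (k + 1)) ≤ Fintype.card V + d * #(walkListsUpTo G k) := by
  rw [walkListsUpTo]
  refine (card_union_le _ _).trans (add_le_add (card_image_le.trans (by simp)) ?_)
  refine card_biUnion_le.trans ?_
  rw [mul_comm, ← smul_eq_mul, ← sum_const]
  refine sum_le_sum fun l hl => card_image_le.trans ?_
  obtain ⟨a, l', rfl⟩ := List.exists_cons_of_ne_nil ((mem_walkListsUpTo G).mp hl).1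
  simpa [← SimpleGraph.neighborFinset_eq_filter, SimpleGraph.adj_comm] using hdeg a

lemma card_walkListsUpTo_add_le {d : ℕ} (hdeg : ∀ v, G.degree v ≤ d) (hd : 2 ≤ d)
    (k : ℕ) :
    #(walkListsUpTo G k) + Fintype.card V ≤ Fintype.card V * d ^ k := by
  induction k with
  | zero => simp [walkListsUpTo]
  | succ k ih =>
    have hsucc := card_walkListsUpTo_succ_le G hdeg k
    have : d * (#(walkListsUpTo G k) + Fintype.card V) ≤ d * (Fintype.card V * d ^ k) :=
      Nat.mul_le_mul_left d ih
    have : 2 * Fintype.card V ≤ d * Fintype.card V := Nat.mul_le_mul_right _ hd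
    rw [pow_succ]
    nlinarith

end WalkLists

section WalkTree

open List

variable {V : Type*} {G : SimpleGraph V}

/-- One-vertex walks hang at height `P / 2` below a common root, so that walks with different
first vertices are at distance at least `P`. -/
noncomputable def walkTreeHeight (P : ℝ) (k : ℕ) : ℝ := if k = 0 then 0 else k - 1 + P / 2

@[simp] lemma walkTreeHeight_zero (P : ℝ) : walkTreeHeight P 0 = 0 := if_pos rfl

lemma walkTreeHeight_of_ne_zero (P : ℝ) {k : ℕ} (hk : k ≠ 0) :
    walkTreeHeight P k = k - 1 + P / 2 := if_neg hk

lemma walkTreeHeight_strictMono {P : ℝ} (hP : 0 < P) : StrictMono (walkTreeHeight P) := by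
  refine strictMono_nat_of_lt_succ fun k => ?_
  rw [walkTreeHeight_of_ne_zero P k.succ_ne_zero]
  unfold walkTreeHeight
  split_ifs <;> push_cast <;> linarith

lemma dist_le_length_sub_of_isChain {l : List V} (hl : l.IsChain G.Adj) (hne : l ≠ []) {i : ℕ}
    (hi : i < l.length) : G.dist l[i] (l.getLast hne) ≤ l.length - 1 - i := by
  have hdrop : l.drop i ≠ [] := by simpa using hi
  have := G.dist_le (SimpleGraph.Walk.ofSupport _ hdrop (hl.drop i))
  simp only [head_drop, getLast_drop, SimpleGraph.Walk.length_ofSupport, length_drop] at this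
  omega

lemma dist_getLast_le_prefixTreeDist [DecidableEq V] (hG : G.Connected) {P : ℝ}
    (hP : ∀ a b, (G.dist a b : ℝ) ≤ P) {x y : List V} (hx : x ≠ []) (hy : y ≠ [])
    (hcx : x.IsChain G.Adj) (hcy : y.IsChain G.Adj) :
    (G.dist (x.getLast hx) (y.getLast hy) : ℝ) ≤ prefixTreeDist (walkTreeHeight P) x y := by
  have hx₁ : 1 ≤ x.length := length_pos_iff.mpr hx
  have hy₁ : 1 ≤ y.length := length_pos_iff.mpr hy
  set j := commonPrefixLength x y with hj
  have hjx : j ≤ x.length := commonPrefixLength_le_length_left x y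
  have hjy : j ≤ y.length := commonPrefixLength_le_length_right x y
  simp only [prefixTreeDist, ← hj, walkTreeHeight_of_ne_zero P (Nat.one_le_iff_ne_zero.mp hx₁),
    walkTreeHeight_of_ne_zero P (Nat.one_le_iff_ne_zero.mp hy₁)]
  rcases Nat.eq_zero_or_pos j with hj₀ | hj₀
  · have : (1 : ℝ) ≤ x.length := by exact_mod_cast hx₁
    have : (1 : ℝ) ≤ y.length := by exact_mod_cast hy₁
    rw [hj₀, walkTreeHeight_zero]
    linarith [hP (x.getLast hx) (y.getLast hy)]
  have hbranch : x[j - 1] = y[j - 1] := by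
    have := congrArg (·[j - 1]?) (take_commonPrefixLength x y)
    simpa [← hj, getElem?_take, hj₀, getElem?_eq_getElem (show j - 1 < x.length by omega),
      getElem?_eq_getElem (show j - 1 < y.length by omega)] using this
  have hdx := dist_le_length_sub_of_isChain hcx hx (i := j - 1) (by omega)
  have hdy := dist_le_length_sub_of_isChain hcy hy (i := j - 1) (by omega)
  rw [hbranch] at hdx
  have htri : G.dist (x.getLast hx) (y.getLast hy) ≤ (x.length - j) + (y.length - j) := by
    calc G.dist (x.getLast hx) (y.getLast hy)
        ≤ G.dist (x.getLast hx) y[j - 1] + G.dist y[j - 1] (y.getLast hy) := hG.dist_triangle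
      _ ≤ (x.length - j) + (y.length - j) := by rw [SimpleGraph.dist_comm]; omega
  have hcast : (G.dist (x.getLast hx) (y.getLast hy) : ℝ) ≤
      (x.length - j : ℕ) + (y.length - j : ℕ) := by
    exact_mod_cast htri
  rw [Nat.cast_sub hjx, Nat.cast_sub hjy] at hcast
  rw [walkTreeHeight_of_ne_zero P hj₀.ne']
  linarith

end WalkTree

section Construction

open List

variable {V : Type*} {G : SimpleGraph V}

lemma exists_geodesic_extension (hG : G.Connected) {x : List V} (hx : x ≠ [])
    (hcx : x.IsChain G.Adj) (b : V) :
    ∃ r : List V, r.length = G.dist (x.getLast hx) b ∧ (x ++ r).IsChain G.Adj ∧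
      (x ++ r).getLast (append_ne_nil_of_left_ne_nil hx r) = b := by
  obtain ⟨p, hp⟩ := hG.exists_walk_length_eq_dist (x.getLast hx) b
  have hsupp := p.cons_tail_support
  refine ⟨p.support.tail, by simp [hp], ?_, ?_⟩
  · have hc := p.isChain_adj_support
    rw [← hsupp, isChain_cons] at hc
    exact isChain_append.mpr ⟨hcx, hc.2, by simpa [getLast?_eq_some_getLast hx] using hc.1⟩
  · have hsplit : x.dropLast ++ p.support = x ++ p.support.tail := by
      conv_lhs => rw [← hsupp, ← singleton_append, ← append_assoc, dropLast_append_getLast]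
    rw [getLast_congr _ (append_ne_nil_of_right_ne_nil _ p.support_ne_nil) hsplit.symm,
      getLast_append_of_ne_nil _ p.support_ne_nil, p.getLast_support]

variable [DecidableEq V]

lemma exists_walkList_step (hG : G.Connected) {P : ℝ} (hP : 1 ≤ P) {s : ℕ} (hs : 1 ≤ s)
    {x : List V} (hx : x ≠ []) (hcx : x.IsChain G.Adj) (hlx : x.length ≤ s) (b : V) :
    ∃ (x₁ : List V) (hx₁ : x₁ ≠ []),
      x₁.IsChain G.Adj ∧ x₁.length ≤ s ∧ x₁.getLast hx₁ = b ∧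
      prefixTreeDist (walkTreeHeight P) x x₁ + (1 + (P - 1) / s) * (x₁.length - 1) ≤
        (2 + (P - 1) / s) * G.dist (x.getLast hx) b + (1 + (P - 1) / s) * (x.length - 1) := by
  set g := G.dist (x.getLast hx) b
  set κ := (P - 1) / s
  have hκ : κ * s = P - 1 := div_mul_cancel₀ _ (Nat.cast_ne_zero.mpr (by omega))
  have hκ₀ : 0 ≤ κ := div_nonneg (by linarith) (Nat.cast_nonneg s)
  have hx₀ : x.length ≠ 0 := by simpa using hx
  rcases le_or_gt (x.length + g) s with hext | hrestart
  · obtain ⟨r, hr, hcr, hlast⟩ := exists_geodesic_extension hG hx hcx b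
    refine ⟨x ++ r, _, hcr, by simpa [hr] using hext, hlast, le_of_eq ?_⟩
    rw [prefixTreeDist_append_right, walkTreeHeight_of_ne_zero P hx₀,
      walkTreeHeight_of_ne_zero P (by omega), length_append, hr]
    push_cast; ring
  · refine ⟨[b], by simp, isChain_singleton b, by simpa using hs, rfl, ?_⟩
    have hjump := prefixTreeDist_le_add
      (walkTreeHeight_strictMono (P := P) (by linarith)).monotone (by simp) x [b]
    rw [walkTreeHeight_of_ne_zero P hx₀, length_singleton,
      walkTreeHeight_of_ne_zero P one_ne_zero] at hjump
    have hsg : (s : ℝ) + 1 ≤ x.length + g := by exact_mod_cast hrestart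
    have hg : (1 : ℝ) ≤ g := by exact_mod_cast (show 1 ≤ g by omega)
    have : κ * s ≤ κ * (x.length - 1 + g) := mul_le_mul_of_nonneg_left (by linarith) hκ₀
    simp only [length_singleton]; push_cast
    nlinarith

open Finset in
theorem exists_walkTree_multiEmbedding [Fintype V] [DecidableRel G.Adj] (hG : G.Connected)
    {P : ℝ} (hP₁ : 1 ≤ P) (hP : ∀ a b, (G.dist a b : ℝ) ≤ P) {s : ℕ} (hs : 1 ≤ s) :
    ∃ (N : Type) (_ : MetricSpace N) (_ : Fintype N) (f : N → V),
      FourPointCond N ∧ Fintype.card N ≤ #(walkListsUpTo G s) ∧ Function.Surjective f ∧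
      (∀ u v : N, (G.dist (f u) (f v) : ℝ) ≤ dist u v) ∧
      GraphPathDistortionLE G f (2 + (P - 1) / s) := by
  set S := walkListsUpTo G s
  have hH := walkTreeHeight_strictMono (P := P) (by linarith)
  let e : Fin #S ≃ S := S.equivFin.symm
  let _ : MetricSpace (Fin #S) := MetricSpace.induced (fun i => (e i).1)
    (Subtype.val_injective.comp e.injective) (prefixTreeMetricSpace hH)
  have hdist : ∀ i j : Fin #S, dist i j = prefixTreeDist (walkTreeHeight P) (e i).1 (e j).1 :=
    fun _ _ => rfl
  have hmem (i : Fin #S) := (mem_walkListsUpTo G).mp (e i).2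
  let f (i : Fin #S) : V := (e i).1.getLast (hmem i).1
  let index (l : List V) (hl : l ∈ S) : Fin #S := e.symm ⟨l, hl⟩
  have hindex (l : List V) (hl : l ∈ S) : (e (index l hl)).1 = l := by simp [index]
  let single (v : V) : Fin #S :=
    index [v] ((mem_walkListsUpTo G).mpr ⟨by simp, isChain_singleton v, by simpa using hs⟩)
  have hsingle (v : V) : (e (single v)).1 = [v] := hindex _ _
  refine ⟨Fin #S, inferInstance, inferInstance, f,
    fun _ _ _ _ => by simpa only [hdist] using prefixTreeDist_four_point hH.monotone _ _ _ _,
    by simp, fun v => ⟨single v, by simp [f, hsingle]⟩,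
    fun u v => by
      simpa only [hdist] using dist_getLast_le_prefixTreeDist hG hP (hmem u).1 (hmem v).1
        (hmem u).2.1 (hmem v).2.1, ?_⟩
  refine graphPathDistortionLE_of_potential
    (fun i => (1 + (P - 1) / s) * ((e i).1.length - 1))
    (fun i => mul_nonneg (by positivity) ?_)
    (fun v => ⟨single v, by simp [f, hsingle], by simp [hsingle]⟩) fun i b => ?_
  · have := (hmem i).1
    have : (1 : ℝ) ≤ (e i).1.length := by exact_mod_cast length_pos_iff.mpr this
    linarith
  · obtain ⟨x₁, hx₁, hcx₁, hlx₁, hlast, hcost⟩ :=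
      exists_walkList_step hG hP₁ hs (hmem i).1 (hmem i).2.1 (hmem i).2.2 b
    have hx₁S : x₁ ∈ S := (mem_walkListsUpTo G).mpr ⟨hx₁, hcx₁, hlx₁⟩
    refine ⟨index x₁ hx₁S, by simpa [f, hindex] using hlast, ?_⟩
    simpa only [hdist, hindex] using hcost

end Construction

lemma SimpleGraph.Connected.dist_le_one_of_degree_le_one {V : Type*} [Fintype V]
    {G : SimpleGraph V} [DecidableRel G.Adj] (hG : G.Connected) (hdeg : ∀ v, G.degree v ≤ 1)
    (a b : V) : G.dist a b ≤ 1 := by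
  classical
  by_contra! h
  obtain ⟨p, hp⟩ := hG.exists_walk_length_eq_dist a b
  obtain ⟨x, c, y, hxc, hcy, -, hxy⟩ := p.exists_adj_adj_not_adj_ne hp h
  have : ({x, y} : Finset V) ⊆ G.neighborFinset c := by
    simp [Finset.insert_subset_iff, hxc.symm, hcy]
  have := (Finset.card_le_card this).trans (hdeg c)
  rw [Finset.card_pair hxy] at this
  omega

/-- Proposition 11: the shortest-path metric of a finite connected graph on `n` vertices
with maximum degree at most `d` and diameter at most `Δ` admits, for every integer
`s ≥ 1`, a surjective non-contractive multi-embedding into a tree metric (a metric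
satisfying the four-point condition) of size at most `n·dˢ` with path distortion at most
`2 + Δ/s`. -/
theorem graph_multiEmbedding_into_tree_metric
    {V : Type*} [Fintype V] (G : SimpleGraph V) [DecidableRel G.Adj] (hG : G.Connected)
    (n : ℕ) (hn : Fintype.card V = n)
    (d : ℕ) (hd : 1 ≤ d) (hdeg : ∀ v : V, G.degree v ≤ d)
    (Δ : ℕ) (hdiam : ∀ a b : V, G.dist a b ≤ Δ)
    (s : ℕ) (hs : 1 ≤ s) :
    ∃ (N : Type) (_ : MetricSpace N) (_ : Fintype N) (f : N → V),
      FourPointCond N ∧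
      Fintype.card N ≤ n * d ^ s ∧
      Function.Surjective f ∧
      (∀ u v : N, (G.dist (f u) (f v) : ℝ) ≤ dist u v) ∧
      GraphPathDistortionLE G f (2 + (Δ : ℝ) / (s : ℝ)) := by
  classical
  subst hn
  rcases le_or_gt 2 d with hd₂ | hd₁
  · obtain ⟨N, hN, hNfin, f, hfour, hcard, hsurj, hnc, hpath⟩ :=
      exists_walkTree_multiEmbedding hG (P := Δ + 1) (by simp)
        (fun a b => by exact_mod_cast (hdiam a b).trans Δ.le_succ) hs
    refine ⟨N, hN, hNfin, f, hfour, ?_, hsurj, hnc, by simpa using hpath⟩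
    linarith [card_walkListsUpTo_add_le G hdeg hd₂ s]
  · have hG₁ := hG.dist_le_one_of_degree_le_one fun v => (hdeg v).trans (by omega)
    obtain ⟨N, hN, hNfin, f, hfour, hcard, hsurj, hnc, hpath⟩ :=
      exists_walkTree_multiEmbedding hG (P := 1) le_rfl (fun a b => by exact_mod_cast hG₁ a b)
        le_rfl
    refine ⟨N, hN, hNfin, f, hfour, ?_, hsurj, hnc, hpath.mono (by norm_num; positivity)⟩
    calc Fintype.card N ≤ (walkListsUpTo G 1).card := hcard
      _ ≤ Fintype.card V := by simpa [walkListsUpTo] using card_walkListsUpTo_succ_le G hdeg 0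
      _ ≤ Fintype.card V * d ^ s := Nat.le_mul_of_pos_right _ (Nat.pow_pos hd)
end

section
/- Let f : N → M be a surjective non-contractive multi-embedding of a metric space M in a metric space N with path distortion at most α, where α ≥ 1. Let s₀' ∈ N and suppose A_N is a deterministic online algorithm on N with initial state s₀' that is r-competitive with additive constant c, i.e., cost_{A_N}(σ') ≤ r·Opt_N(σ') + c for every finite task sequence σ' on N. Define the online algorithm A on M with initial state f(s₀') by A(τ_1,…,τ_i) = f(A_N(τ_1∘f,…,τ_i∘f)). Then cost_A(σ) ≤ α·r·Opt_M(σ) + c for every finite task sequence σ on M. -/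
open ENNReal

/-- A multi-embedding `f : N → M` (a surjective map) is non-contractive if
distances in `N` dominate the distances of the images in `M`. -/
def NonContractive {N M : Type*} [MetricSpace N] [MetricSpace M] (f : N → M) : Prop :=
  ∀ u v : N, dist (f u) (f v) ≤ dist u v

/-- The optimal offline cost of serving the task sequence `σ` in the metrical task
system on `S` (the initial state is unconstrained). -/
noncomputable def mtsOpt {S : Type*} [MetricSpace S] (σ : List (S → ℝ≥0∞)) : ℝ≥0∞ :=
  ⨅ s : Fin (σ.length + 1) → S,
    ∑ i : Fin σ.length, (edist (s i.castSucc) (s i.succ) + σ.get i (s i.succ))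

/-- The cost of a deterministic online algorithm `A` (a function from finite task
sequences to states, with `A ⟨⟩` the initial state) on the task sequence `σ`:
the sum over `i` of the movement cost from `A(τ_1,…,τ_{i-1})` to `A(τ_1,…,τ_i)` plus the
service cost `τ_i(A(τ_1,…,τ_i))`. -/
noncomputable def mtsAlgCost {S : Type*} [MetricSpace S]
    (A : List (S → ℝ≥0∞) → S) (σ : List (S → ℝ≥0∞)) : ℝ≥0∞ :=
  ∑ i : Fin σ.length,
    (edist (A (σ.take i.val)) (A (σ.take (i.val + 1))) + σ.get i (A (σ.take (i.val + 1))))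

/-!
Run `A_N` on the pulled-back tasks `τ ∘ f` and project its states by `f`. The projected
algorithm serves each task at the same cost as `A_N`, and since `f` is 1-Lipschitz it moves no
more, so its cost is at most `cost_{A_N}(σ ∘ f)`. Conversely, every offline schedule in `M` is a
path, which lifts through `f` to a path in `N` that is at most `α` times longer and pays the same
service costs; hence `Opt_N(σ ∘ f) ≤ α · Opt_M(σ)` (using `α ≥ 1` for the service part).
-/

lemma ofReal_pathLength_ofFn {X : Type*} [MetricSpace X] {n : ℕ} (s : Fin (n + 1) → X) :
    ENNReal.ofReal (pathLength (List.ofFn s)) = ∑ i : Fin n, edist (s i.castSucc) (s i.succ) := by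
  have hzip : List.zipWith dist (List.ofFn s) (List.ofFn s).tail =
      List.ofFn fun i : Fin n => dist (s i.castSucc) (s i.succ) := by
    apply List.ext_getElem <;> simp [-List.ofFn_succ]
  rw [pathLength, hzip, List.sum_ofFn, ENNReal.ofReal_sum_of_nonneg fun _ _ => dist_nonneg]
  simp only [edist_dist]

lemma mtsOpt_le {S : Type*} [MetricSpace S] {σ : List (S → ℝ≥0∞)} {n : ℕ} (hn : σ.length = n)
    (s : Fin (n + 1) → S) :
    mtsOpt σ ≤ ∑ i : Fin n, (edist (s i.castSucc) (s i.succ) + σ[i.val] (s i.succ)) := by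
  subst hn
  exact iInf_le _ s

section

variable {M N : Type*} [MetricSpace M] [MetricSpace N] {f : N → M} {α : ℝ}

lemma PathDistortionLE.exists_lift (hf : PathDistortionLE f α) {n : ℕ} (s : Fin (n + 1) → M) :
    ∃ s' : Fin (n + 1) → N, f ∘ s' = s ∧
      pathLength (List.ofFn s') ≤ α * pathLength (List.ofFn s) := by
  obtain ⟨p, hmap, hlen⟩ := hf (List.ofFn s)
  have hp : p.length = n + 1 := by simpa using congrArg List.length hmap
  have hofFn : List.ofFn (fun i : Fin (n + 1) => p[i.val]) = p :=
    List.ext_getElem (by simp [hp]) (by simp [-List.ofFn_succ])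
  refine ⟨fun i => p[i.val], ?_, hofFn ▸ hlen⟩
  rw [← List.ofFn_inj, ← List.map_ofFn, hofFn, hmap]

lemma PathDistortionLE.exists_lift_edist (hf : PathDistortionLE f α) (hα : 0 ≤ α) {n : ℕ}
    (s : Fin (n + 1) → M) :
    ∃ s' : Fin (n + 1) → N, f ∘ s' = s ∧
      ∑ i : Fin n, edist (s' i.castSucc) (s' i.succ) ≤
        ENNReal.ofReal α * ∑ i : Fin n, edist (s i.castSucc) (s i.succ) := by
  obtain ⟨s', hs', hlen⟩ := hf.exists_lift s
  refine ⟨s', hs', ?_⟩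
  rw [← ofReal_pathLength_ofFn, ← ofReal_pathLength_ofFn, ← ENNReal.ofReal_mul hα]
  exact ENNReal.ofReal_le_ofReal hlen

lemma mtsOpt_map_comp_le (hf : PathDistortionLE f α) (hα : 1 ≤ α) (σ : List (M → ℝ≥0∞)) :
    mtsOpt (σ.map (· ∘ f)) ≤ ENNReal.ofReal α * mtsOpt σ := by
  rw [mtsOpt.eq_def σ,
    ENNReal.mul_iInf_of_ne (by simpa using zero_lt_one.trans_le hα) ofReal_ne_top]
  refine le_iInf fun s => ?_
  obtain ⟨s', hs', hmove⟩ := hf.exists_lift_edist (by linarith) s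
  have hserve : ∀ i : Fin σ.length, (σ.map (· ∘ f))[i.val] (s' i.succ) = σ.get i (s i.succ) := by
    intro i
    simp [← hs']
  calc mtsOpt (σ.map (· ∘ f))
      ≤ ∑ i : Fin σ.length, (edist (s' i.castSucc) (s' i.succ) + σ.get i (s i.succ)) := by
        simpa only [hserve] using mtsOpt_le (List.length_map (· ∘ f)) s'
    _ ≤ ENNReal.ofReal α * ∑ i : Fin σ.length, edist (s i.castSucc) (s i.succ)
          + ENNReal.ofReal α * ∑ i : Fin σ.length, σ.get i (s i.succ) := by
        rw [Finset.sum_add_distrib]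
        gcongr
        exact le_mul_of_one_le_left' (ENNReal.one_le_ofReal.mpr hα)
    _ = _ := by rw [← mul_add, Finset.sum_add_distrib]

lemma mtsAlgCost_comp_le_map_comp (hf : NonContractive f) (A : List (N → ℝ≥0∞) → N)
    (σ : List (M → ℝ≥0∞)) :
    mtsAlgCost (fun τs => f (A (τs.map (· ∘ f)))) σ ≤ mtsAlgCost A (σ.map (· ∘ f)) := by
  rw [mtsAlgCost, mtsAlgCost, ← Fin.sum_congr' _ (List.length_map _)]
  refine Finset.sum_le_sum fun i _ => add_le_add ?_ (by simp [List.map_take])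
  simp only [edist_dist, List.map_take, Fin.val_cast]
  exact ENNReal.ofReal_le_ofReal (hf _ _)

end

theorem mts_competitive_of_pathDistortion_general
    {M N : Type*} [MetricSpace M] [MetricSpace N]
    (f : N → M) (α : ℝ) (hα : 1 ≤ α)
    (hnc : NonContractive f)
    (hpd : PathDistortionLE f α)
    (AN : List (N → ℝ≥0∞) → N)
    (r c : ℝ≥0∞)
    (hcomp : ∀ σ' : List (N → ℝ≥0∞), mtsAlgCost AN σ' ≤ r * mtsOpt σ' + c)
    (σ : List (M → ℝ≥0∞)) :
    mtsAlgCost (fun τs => f (AN (τs.map (fun τ => τ ∘ f)))) σ ≤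
      ENNReal.ofReal α * r * mtsOpt σ + c := by
  calc mtsAlgCost (fun τs => f (AN (τs.map (fun τ => τ ∘ f)))) σ
      ≤ mtsAlgCost AN (σ.map (· ∘ f)) := mtsAlgCost_comp_le_map_comp hnc AN σ
    _ ≤ r * mtsOpt (σ.map (· ∘ f)) + c := hcomp _
    _ ≤ r * (ENNReal.ofReal α * mtsOpt σ) + c := by gcongr; exact mtsOpt_map_comp_le hpd hα σ
    _ = ENNReal.ofReal α * r * mtsOpt σ + c := by ring

/-- Proposition 5: if `f : N → M` is a surjective non-contractive multi-embedding with
path distortion at most `α ≥ 1` and `A_N` is an online algorithm on `N` (with initial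
state `s₀' = A_N ⟨⟩`) that is `r`-competitive with additive constant `c`, then the online
algorithm `A` on `M` defined by `A(τ_1,…,τ_i) = f(A_N(τ_1∘f,…,τ_i∘f))` (with initial
state `f(s₀')`) satisfies `cost_A(σ) ≤ α·r·Opt_M(σ) + c` for every task sequence `σ`. -/
theorem mts_competitive_of_pathDistortion
    {M N : Type*} [MetricSpace M] [MetricSpace N]
    (f : N → M) (α : ℝ) (hα : 1 ≤ α)
    (hsurj : Function.Surjective f)
    (hnc : NonContractive f)
    (hpd : PathDistortionLE f α)
    (AN : List (N → ℝ≥0∞) → N) (s₀' : N) (hinit : AN [] = s₀')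
    (r c : ℝ≥0∞)
    (hcomp : ∀ σ' : List (N → ℝ≥0∞), mtsAlgCost AN σ' ≤ r * mtsOpt σ' + c)
    (σ : List (M → ℝ≥0∞)) :
    mtsAlgCost (fun τs => f (AN (τs.map (fun τ => τ ∘ f)))) σ ≤
      ENNReal.ofReal α * r * mtsOpt σ + c :=
  mts_competitive_of_pathDistortion_general f α hα hnc hpd AN r c hcomp σ
end

section
/- Let n ≥ 2, let t ≥ 1 be an integer, and set β = (log₂ n)^(1/t). If real numbers satisfy 1/n ≤ ε_0 ≤ ε_1 ≤ … ≤ ε_t ≤ 1/2, then there exists i ∈ {1,…,t} with ε_{i−1} ≥ ε_i^β. -/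
/-- The shell-selection lemma for the size bound `n^((log₂ n)^(1/t))`: if
`1/n ≤ ε_0 ≤ ε_1 ≤ … ≤ ε_t ≤ 1/2` (with `n ≥ 2`, `t ≥ 1`) and `β = (log₂ n)^(1/t)`,
then `ε_{i-1} ≥ ε_i ^ β` for some `i ∈ {1,…,t}`. -/
theorem shell_selection_card
    (n : ℕ) (hn : 2 ≤ n) (t : ℕ) (ht : 1 ≤ t)
    (ε : ℕ → ℝ)
    (h0 : 1 / (n : ℝ) ≤ ε 0)
    (hmono : ∀ i < t, ε i ≤ ε (i + 1))
    (htop : ε t ≤ 1 / 2) :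
    ∃ i, 1 ≤ i ∧ i ≤ t ∧
      ε i ^ ((Real.logb 2 n) ^ ((1 : ℝ) / (t : ℝ))) ≤ ε (i - 1) := by
  by_contra hcon
  push_neg at hcon
  set L : ℝ := Real.logb 2 n with hLdef
  set β : ℝ := L ^ ((1 : ℝ) / (t : ℝ)) with hβdef
  have hn1 : (1 : ℝ) < n := by exact_mod_cast lt_of_lt_of_le one_lt_two (by exact_mod_cast hn)
  have hnpos : (0 : ℝ) < n := by linarith
  have hL1 : (1 : ℝ) ≤ L := by
    have := Real.logb_le_logb_of_le (b := 2) (by norm_num) (by norm_num : (0:ℝ) < 2)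
      (by exact_mod_cast hn : (2:ℝ) ≤ n)
    simpa [Real.logb_self_eq_one] using this
  have hLpos : (0 : ℝ) < L := by linarith
  have hβ1 : (1 : ℝ) ≤ β := Real.one_le_rpow hL1 (by positivity)
  have hβpos : (0 : ℝ) < β := by linarith
  -- positivity of ε i for i ≤ t
  have hpos : ∀ i ≤ t, 0 < ε i := by
    intro i hi
    induction i with
    | zero => have : (0:ℝ) < 1 / n := by positivity
              linarith
    | succ k ih =>
      have hkt : k < t := Nat.lt_of_succ_le hi
      have := hmono k hkt
      have := ih (le_of_lt hkt)
      linarith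
  -- chain inequality
  have key : ∀ k, 1 ≤ k → k ≤ t → ε 0 < ε k ^ (β ^ k) := by
    intro k hk1
    induction k with
    | zero => omega
    | succ m ih =>
      intro hkt
      rcases Nat.eq_zero_or_pos m with hm | hm
      · subst hm
        have h1 := hcon 1 le_rfl hkt
        simpa [pow_one] using h1
      · have hm1 : 1 ≤ m := hm
        have hmt : m ≤ t := by omega
        have hih := ih hm1 hmt
        have hstep : ε m < ε (m + 1) ^ β := by
          simpa using hcon (m + 1) (by omega) hkt
        have hεm : 0 ≤ ε m := (hpos m hmt).le
        have hβk : (0 : ℝ) < β ^ m := by positivity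
        have h2 : ε m ^ (β ^ m) < (ε (m + 1) ^ β) ^ (β ^ m) :=
          Real.rpow_lt_rpow hεm hstep hβk
        have hε1 : 0 ≤ ε (m + 1) := (hpos (m+1) hkt).le
        have h3 : (ε (m + 1) ^ β) ^ (β ^ m) = ε (m + 1) ^ (β ^ (m + 1)) := by
          rw [← Real.rpow_mul hε1, ← pow_succ']
        calc ε 0 < ε m ^ (β ^ m) := hih
          _ < (ε (m + 1) ^ β) ^ (β ^ m) := h2
          _ = ε (m + 1) ^ (β ^ (m + 1)) := h3
  have htne : (t : ℝ) ≠ 0 := by positivity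
  have hβt : β ^ t = L := by
    rw [← Real.rpow_natCast β t, hβdef, ← Real.rpow_mul hLpos.le]
    rw [one_div_mul_cancel htne, Real.rpow_one]
  have hfin := key t ht le_rfl
  rw [hβt] at hfin
  have hbig : ε t ^ L ≤ (1 / 2 : ℝ) ^ L :=
    Real.rpow_le_rpow (hpos t le_rfl).le htop hLpos.le
  have h2L : ((1 : ℝ) / 2) ^ L = 1 / n := by
    rw [one_div, Real.inv_rpow (by norm_num : (0:ℝ) ≤ 2),
      hLdef, Real.rpow_logb (by norm_num) (by norm_num) hnpos, one_div]
  rw [h2L] at hbig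
  linarith
end

section
/- Let n ≥ 2, let t ≥ 1 be an integer, let Δ ≥ 1 be real, and define β(x) = (t·log₂(4x))^(2/t). If real numbers satisfy 1/n ≤ ε_0 ≤ ε_1 ≤ … ≤ ε_t ≤ 1, then there exists i ∈ {1,…,t} with ε_{i−1} ≥ ε_i^{β(Δ/2)} · n^{β(Δ/2) − β(Δ)}. -/
/-!
Write `L = t·log₂(2Δ)`, so that `β(Δ/2) = L^(2/t) =: a` and `β(Δ) = (L + t)^(2/t) =: b`.
If no shell is good, then `x_i = -log ε_i` satisfies `a·x_i + (b - a)·log n < x_{i-1}`;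
iterating from `x_t ≥ 0` gives `(b - a)(1 + a + ⋯ + a^(t-1))·log n < x_0 ≤ log n`.
This is impossible because `b - a ≥ L^(2/t - 1)` (Bernoulli's inequality, applied on the
appropriate side of `2/t = 1`) while the last term of the geometric sum is `L^(2 - 2/t)`,
and `L ≥ t ≥ 1`.
-/

open Finset Real

namespace Real

theorem mul_mul_rpow_sub_one_le_add_rpow_sub_rpow {p x h : ℝ} (hp : 1 ≤ p) (hx : 0 < x)
    (hh : 0 ≤ h) : p * h * x ^ (p - 1) ≤ (x + h) ^ p - x ^ p := by
  have bernoulli := one_add_mul_self_le_rpow_one_add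
    (by have := div_nonneg hh hx.le; linarith : -1 ≤ h / x) hp
  rw [show x + h = x * (1 + h / x) by field_simp, mul_rpow hx.le (by positivity),
    rpow_sub_one hx.ne']
  have := mul_le_mul_of_nonneg_left bernoulli (rpow_nonneg hx.le p)
  field_simp at this ⊢
  linarith

theorem mul_mul_add_rpow_sub_one_le_add_rpow_sub_rpow {p x h : ℝ} (hp0 : 0 ≤ p) (hp1 : p ≤ 1)
    (hx : 0 < x) (hh : 0 ≤ h) : p * h * (x + h) ^ (p - 1) ≤ (x + h) ^ p - x ^ p := by
  have hxh : 0 < x + h := by linarith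
  have bernoulli := rpow_one_add_le_one_add_mul_self
    (by have := div_nonneg hx.le hxh.le; linarith : -1 ≤ x / (x + h) - 1) hp0 hp1
  rw [add_sub_cancel, div_rpow hx.le hxh.le, div_le_iff₀ (rpow_pos_of_pos hxh p)] at bernoulli
  have expand : (1 + p * (x / (x + h) - 1)) * (x + h) ^ p
      = (x + h) ^ p - p * h * ((x + h) ^ p / (x + h)) := by
    field_simp; ring
  rw [rpow_sub_one hxh.ne']
  linarith

end Real

theorem one_le_add_rpow_sub_rpow_mul_geom_sum {t : ℕ} (ht : 1 ≤ t) {L : ℝ} (hL : t ≤ L) :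
    1 ≤ ((L + t) ^ ((2 : ℝ) / t) - L ^ ((2 : ℝ) / t)) *
      ∑ k ∈ range t, (L ^ ((2 : ℝ) / t)) ^ k := by
  set p : ℝ := 2 / t
  have ht0 : (0 : ℝ) < t := by exact_mod_cast ht
  have hpt : p * t = 2 := div_mul_cancel₀ 2 ht0.ne'
  have hp0 : 0 ≤ p := by positivity
  have hL1 : 1 ≤ L := le_trans (by exact_mod_cast ht) hL
  have hL0 : 0 < L := by linarith
  have gap : L ^ (p - 1) ≤ (L + t) ^ p - L ^ p := by
    rcases le_total 1 p with hp | hp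
    · calc L ^ (p - 1) ≤ p * t * L ^ (p - 1) := by
            rw [hpt]; linarith [rpow_nonneg hL0.le (p - 1)]
        _ ≤ _ := mul_mul_rpow_sub_one_le_add_rpow_sub_rpow hp hL0 ht0.le
    · calc L ^ (p - 1) ≤ 2 ^ p * L ^ (p - 1) :=
            le_mul_of_one_le_left (rpow_nonneg hL0.le _) (one_le_rpow one_le_two hp0)
        _ = 2 * (2 * L) ^ (p - 1) := by
            rw [mul_rpow zero_le_two hL0.le, ← mul_assoc, rpow_sub_one two_ne_zero]; ring
        _ ≤ p * t * (L + t) ^ (p - 1) := by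
            rw [hpt]; gcongr ?_ * ?_
            exact rpow_le_rpow_of_nonpos (by positivity) (by linarith) (by linarith)
        _ ≤ _ := mul_mul_add_rpow_sub_one_le_add_rpow_sub_rpow hp0 hp hL0 ht0.le
  have last_term : L ^ (2 - p) ≤ ∑ k ∈ range t, (L ^ p) ^ k := by
    have hexp : p * ((t - 1 : ℕ) : ℝ) = 2 - p := by
      rw [Nat.cast_sub ht, mul_sub, hpt]; simp
    rw [← hexp, rpow_mul hL0.le, rpow_natCast]
    exact single_le_sum (fun k _ ↦ pow_nonneg (rpow_nonneg hL0.le p) k)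
      (mem_range.mpr (Nat.sub_lt ht one_pos))
  calc 1 ≤ L := hL1
    _ = L ^ (p - 1) * L ^ (2 - p) := by rw [← rpow_add hL0]; norm_num
    _ ≤ _ := mul_le_mul gap last_term (rpow_nonneg hL0.le _)
        (by linarith [rpow_nonneg hL0.le (p - 1)])

theorem pow_mul_add_mul_geom_sum_lt {a d : ℝ} (ha : 0 ≤ a) {x : ℕ → ℝ} {t : ℕ} (ht : 1 ≤ t)
    (hx : ∀ i < t, a * x (i + 1) + d < x i) :
    a ^ t * x t + d * ∑ k ∈ range t, a ^ k < x 0 := by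
  induction t, ht using Nat.le_induction with
  | base => simpa using hx 0 one_pos
  | succ t ht ih =>
    calc a ^ (t + 1) * x (t + 1) + d * ∑ k ∈ range (t + 1), a ^ k
        = a ^ t * (a * x (t + 1) + d) + d * ∑ k ∈ range t, a ^ k := by
          rw [sum_range_succ]; ring
      _ ≤ a ^ t * x t + d * ∑ k ∈ range t, a ^ k := by
          gcongr; exact (hx t (Nat.lt_succ_self t)).le
      _ < x 0 := ih fun i hi ↦ hx i (hi.trans (Nat.lt_succ_self t))

theorem exists_shell_of_one_le_sub_mul_geom_sum {n : ℝ} (hn : 1 ≤ n) {t : ℕ} (ht : 1 ≤ t)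
    {a b : ℝ} (ha : 0 ≤ a) (hgap : 1 ≤ (b - a) * ∑ k ∈ range t, a ^ k) {ε : ℕ → ℝ}
    (h0 : 1 / n ≤ ε 0) (hmono : ∀ i < t, ε i ≤ ε (i + 1)) (htop : ε t ≤ 1) :
    ∃ i, 1 ≤ i ∧ i ≤ t ∧ ε i ^ a * n ^ (a - b) ≤ ε (i - 1) := by
  by_contra! hcon
  have hn0 : 0 < n := by linarith
  have hpos : ∀ i ≤ t, 0 < ε i := by
    intro i
    induction i with
    | zero => exact fun _ ↦ (one_div_pos.mpr hn0).trans_le h0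
    | succ i ih => exact fun hi ↦ (ih (by omega)).trans_le (hmono i hi)
  have step : ∀ i < t, a * -log (ε (i + 1)) + (b - a) * log n < -log (ε i) := by
    intro i hi
    have := log_lt_log (hpos i hi.le) (by simpa using hcon (i + 1) (by omega) hi)
    rw [log_mul (rpow_pos_of_pos (hpos (i + 1) hi) a).ne' (rpow_pos_of_pos hn0 _).ne',
      log_rpow (hpos (i + 1) hi), log_rpow hn0] at this
    linarith
  have iterate := pow_mul_add_mul_geom_sum_lt (x := fun i ↦ -log (ε i)) ha ht step
  have hlast : 0 ≤ a ^ t * -log (ε t) :=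
    mul_nonneg (pow_nonneg ha t) (neg_nonneg.mpr (log_nonpos (hpos t le_rfl).le htop))
  have hfirst : -log (ε 0) ≤ log n := by
    have := log_le_log (one_div_pos.mpr hn0) h0
    rw [one_div, log_inv] at this
    linarith
  have hlogn : log n ≤ (b - a) * log n * ∑ k ∈ range t, a ^ k := by
    rw [mul_right_comm]; exact le_mul_of_one_le_left (log_nonneg hn) hgap
  linarith

/-- The shell-selection lemma for the size bound `n^((t·log₂(4Δ))^(2/t))`: with
`β(x) = (t·log₂(4x))^(2/t)`, if `1/n ≤ ε_0 ≤ ε_1 ≤ … ≤ ε_t ≤ 1` (`n ≥ 2`, `t ≥ 1`,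
`Δ ≥ 1`), then `ε_{i-1} ≥ ε_i ^ β(Δ/2) · n ^ (β(Δ/2) − β(Δ))` for some `i ∈ {1,…,t}`. -/
theorem shell_selection_aspectRatio
    (n : ℕ) (hn : 2 ≤ n) (t : ℕ) (ht : 1 ≤ t) (Δ : ℝ) (hΔ : 1 ≤ Δ)
    (ε : ℕ → ℝ)
    (h0 : 1 / (n : ℝ) ≤ ε 0)
    (hmono : ∀ i < t, ε i ≤ ε (i + 1))
    (htop : ε t ≤ 1) :
    ∃ i, 1 ≤ i ∧ i ≤ t ∧
      ε i ^ (((t : ℝ) * Real.logb 2 (4 * (Δ / 2))) ^ ((2 : ℝ) / (t : ℝ))) *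
        (n : ℝ) ^ ((((t : ℝ) * Real.logb 2 (4 * (Δ / 2))) ^ ((2 : ℝ) / (t : ℝ))) -
                   (((t : ℝ) * Real.logb 2 (4 * Δ)) ^ ((2 : ℝ) / (t : ℝ)))) ≤
      ε (i - 1) := by
  have hlog : 1 ≤ Real.logb 2 (2 * Δ) :=
    (Real.le_logb_iff_rpow_le one_lt_two (by positivity)).mpr (by norm_num; linarith)
  have hshift : (t : ℝ) * Real.logb 2 (4 * Δ) = t * Real.logb 2 (2 * Δ) + t := by
    rw [show (4 : ℝ) * Δ = 2 * (2 * Δ) by ring, Real.logb_mul two_ne_zero (by positivity),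
      Real.logb_self_eq_one one_lt_two]
    ring
  rw [show (4 : ℝ) * (Δ / 2) = 2 * Δ by ring, hshift]
  exact exists_shell_of_one_le_sub_mul_geom_sum (by exact_mod_cast (by omega : 1 ≤ n)) ht
    (by positivity) (one_le_add_rpow_sub_rpow_mul_geom_sum ht (by nlinarith)) h0 hmono htop
end

section
/- For every real a ≥ 1 and every integer t ≥ 1, (t·a)^(2 − 2/t) · ( (t·(a+1))^(2/t) − (t·a)^(2/t) ) ≥ t·a; in particular this quantity is at least 1. -/
/-! With `x = t·a`, `r = (a+1)/a` and `p = 2/t`, the quantity equals `x² (r^p - 1)`.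
Since `r^p = exp (p log r) ≥ 1 + p log r ≥ 1 + p (1 - 1/r)`, it is at least
`x² · (2/t) · 1/(a+1) = x · 2a/(a+1) ≥ x`. -/

open Real

lemma Real.mul_log_le_rpow_sub_one {r : ℝ} (hr : 0 < r) (p : ℝ) : p * log r ≤ r ^ p - 1 := by
  rw [rpow_def_of_pos hr, mul_comm]
  linarith [add_one_le_exp (log r * p)]

lemma Real.mul_one_sub_inv_le_rpow_sub_one {r p : ℝ} (hr : 0 < r) (hp : 0 ≤ p) :
    p * (1 - r⁻¹) ≤ r ^ p - 1 :=
  (mul_le_mul_of_nonneg_left (one_sub_inv_le_log_of_pos hr) hp).trans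
    (mul_log_le_rpow_sub_one hr p)

lemma Real.rpow_sub_mul_mul_rpow_sub_rpow {x r : ℝ} (hx : 0 < x) (hr : 0 ≤ r) (p q : ℝ) :
    x ^ (q - p) * ((x * r) ^ p - x ^ p) = x ^ q * (r ^ p - 1) := by
  rw [mul_rpow hx.le hr, rpow_sub hx]
  field_simp

/-- The mean-value-theorem estimate in the size analysis of the multi-embedding
construction: for every real `a ≥ 1` and integer `t ≥ 1`,
`(t·a)^(2 − 2/t) · ((t·(a+1))^(2/t) − (t·a)^(2/t)) ≥ t·a ≥ 1`. -/
theorem mvt_exponent_estimate (a : ℝ) (ha : 1 ≤ a) (t : ℕ) (ht : 1 ≤ t) :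
    (t : ℝ) * a ≤
      ((t : ℝ) * a) ^ ((2 : ℝ) - 2 / (t : ℝ)) *
        (((t : ℝ) * (a + 1)) ^ ((2 : ℝ) / (t : ℝ)) - ((t : ℝ) * a) ^ ((2 : ℝ) / (t : ℝ))) ∧
    (1 : ℝ) ≤
      ((t : ℝ) * a) ^ ((2 : ℝ) - 2 / (t : ℝ)) *
        (((t : ℝ) * (a + 1)) ^ ((2 : ℝ) / (t : ℝ)) - ((t : ℝ) * a) ^ ((2 : ℝ) / (t : ℝ))) := by
  have ht' : (1 : ℝ) ≤ t := by exact_mod_cast ht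
  have ha₀ : 0 < a := by linarith
  have hx : 1 ≤ (t : ℝ) * a := one_le_mul_of_one_le_of_one_le ht' ha
  have hr : 0 < (a + 1) / a := by positivity
  have hsplit : (t : ℝ) * (a + 1) = t * a * ((a + 1) / a) := by field_simp
  have hbound : (t : ℝ) * a ≤ ((t : ℝ) * a) ^ (2 : ℝ) * (((a + 1) / a) ^ (2 / (t : ℝ)) - 1) :=
    calc (t : ℝ) * a ≤ (t * a) ^ 2 * (2 / t * (1 - ((a + 1) / a)⁻¹)) := by
          field_simp
          nlinarith
      _ ≤ ((t : ℝ) * a) ^ (2 : ℝ) * (((a + 1) / a) ^ (2 / (t : ℝ)) - 1) := by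
          rw [rpow_two]
          gcongr
          exact mul_one_sub_inv_le_rpow_sub_one hr (by positivity)
  rw [hsplit, rpow_sub_mul_mul_rpow_sub_rpow (by linarith) hr.le]
  exact ⟨hbound, hx.trans hbound⟩
end
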